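/- Define f : B² → ℂ² by f(z₁,z₂) = (z₁, ¼·z₂·(1−z₁)²). Then: (i) f(B²) ⊆ B²; (ii) f is injective on B²; (iii) e₁ is a boundary regular fixed point of f; (iv) for every M > 1 and every δ > 0, the set C(M) ∩ B(e₁,δ) is not contained in f(B²). In particular the image of f does not eventually contain any cone with vertex at e₁. -/

import Mathlib

/-!
On the line `z₂ = 0` the map is the identity, which gives the boundary regular fixed point at `e₁`.
Since `|1 - z₁| ≤ 2`, the map only shrinks the second coordinate, so it preserves the ball, and
it is injective because `1 - z₁ ≠ 0` on the ball. Over the slice `z₁ = 1 - ε` the image is the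
disc `|w₂| < ε²/4`, so it misses the points `(1 - ε, ε²/4)`; but these approach `e₁` along the
normal direction (their distances to `e₁` and to the sphere are both of order `ε`), hence they
enter every cone `C(M)`.
-/

open Metric Filter Set Topology

/-- Inverse hyperbolic tangent. -/
noncomputable def arctanh (x : ℝ) : ℝ := (1/2) * Real.log ((1 + x) / (1 - x))

/-- The point `e₁ = (1,0,…,0)` of `ℂ^(n+1)`. -/
noncomputable def e1 (n : ℕ) : EuclideanSpace ℂ (Fin (n+1)) := EuclideanSpace.single 0 1

/-- The Kobayashi distance of the unit ball `B^(n+1)`: `k(a,b) = arctanh σ(a,b)`. -/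
noncomputable def kB {n : ℕ} (a b : EuclideanSpace ℂ (Fin (n+1))) : ℝ :=
  arctanh (Real.sqrt (1 - (1 - ‖a‖^2) * (1 - ‖b‖^2) / ‖1 - (inner ℂ a b : ℂ)‖^2))

/-- The projection `π(z) = ⟨z,e₁⟩e₁` (where `⟨z,w⟩ = Σ z_j conj(w_j)`). -/
noncomputable def projE1 {n : ℕ} (z : EuclideanSpace ℂ (Fin (n+1))) : EuclideanSpace ℂ (Fin (n+1)) :=
  (inner ℂ (e1 n) z : ℂ) • e1 n

/-- The Stolz region `K(M,s)`. -/
def StolzK (M s : ℝ) : Set ℂ :=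
  {ζ | ‖ζ‖ < 1 ∧ ‖1 - ζ‖ < M * (1 - ‖ζ‖) ∧ ‖1 - ζ‖ < s}

/-- The cone `C(M)` of vertex `e₁` and amplitude `M`. -/
def coneB (n : ℕ) (M : ℝ) : Set (EuclideanSpace ℂ (Fin (n+1))) :=
  {z | ‖z‖ < 1 ∧ ‖e1 n - z‖ < M * (1 - ‖z‖)}

/-- `e₁` is a boundary regular fixed point of `f`. -/
def IsBRFP {n : ℕ} (f : EuclideanSpace ℂ (Fin (n+1)) → EuclideanSpace ℂ (Fin (n+1))) : Prop :=
  Filter.liminf (fun z => ENNReal.ofReal ((1 - ‖f z‖) / (1 - ‖z‖))) (𝓝[Metric.ball 0 1] (e1 n)) < ⊤ ∧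
  Filter.Tendsto (fun r : ℝ => f ((r : ℂ) • e1 n)) (𝓝[Set.Ioo (0:ℝ) 1] 1) (𝓝 (e1 n))

/-- The determinant of the complex differential of `f` at `z`. -/
noncomputable def jacDet {n : ℕ} (f : EuclideanSpace ℂ (Fin (n+1)) → EuclideanSpace ℂ (Fin (n+1)))
    (z : EuclideanSpace ℂ (Fin (n+1))) : ℂ :=
  LinearMap.det (fderiv ℂ f z).toLinearMap

/-- `e₁` is a boundary super-regular fixed point of `f`. -/
def IsBSRFP {n : ℕ} (f : EuclideanSpace ℂ (Fin (n+1)) → EuclideanSpace ℂ (Fin (n+1))) : Prop :=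
  IsBRFP f ∧ ∀ M > 1, ∃ c > 0, ∀ ζ : ℕ → ℂ, (∀ k, ζ k ∈ StolzK M 2) →
    Filter.Tendsto ζ atTop (𝓝 1) →
    ENNReal.ofReal c ≤
      Filter.liminf (fun k => ENNReal.ofReal (‖jacDet f ((ζ k) • e1 n)‖)) atTop

/-- `A ⊆ B^(n+1)` is admissible at `e₁`. -/
def AdmissibleB {n : ℕ} (A : Set (EuclideanSpace ℂ (Fin (n+1)))) : Prop :=
  A ⊆ Metric.ball 0 1 ∧ e1 n ∈ closure A ∧
  ∀ ε > 0, ∃ δ > 0, ∃ M > 1, ∀ z ∈ A ∩ Metric.ball (e1 n) δ,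
    projE1 z ∈ coneB n M ∧ kB z (projE1 z) < ε

theorem PiLp.norm_le_norm_of_forall_norm_apply_le {ι : Type*} [Fintype ι] {β : ι → Type*}
    [∀ i, SeminormedAddCommGroup (β i)] {x y : PiLp 2 β} (h : ∀ i, ‖x i‖ ≤ ‖y i‖) :
    ‖x‖ ≤ ‖y‖ := by
  rw [← sq_le_sq₀ (norm_nonneg _) (norm_nonneg _), PiLp.norm_sq_eq_of_L2, PiLp.norm_sq_eq_of_L2]
  exact Finset.sum_le_sum fun i _ => pow_le_pow_left₀ (norm_nonneg _) (h i) 2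

theorem norm_ofReal_smul_e1 (n : ℕ) (r : ℝ) : ‖(r : ℂ) • e1 n‖ = |r| := by
  simp [e1, norm_smul]

theorem isBRFP_of_eqOn_radius {n : ℕ}
    {f : EuclideanSpace ℂ (Fin (n+1)) → EuclideanSpace ℂ (Fin (n+1))}
    (hf : ∀ r ∈ Ioo (0 : ℝ) 1, f ((r : ℂ) • e1 n) = (r : ℂ) • e1 n) : IsBRFP f := by
  have hradius : Tendsto (fun r : ℝ => (r : ℂ) • e1 n) (𝓝[Ioo 0 1] 1) (𝓝 (e1 n)) := by
    simpa using ((Complex.continuous_ofReal.tendsto 1).smul_const (e1 n)).mono_left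
      nhdsWithin_le_nhds
  have hfix : ∀ᶠ r : ℝ in 𝓝[Ioo 0 1] 1, (r : ℂ) • e1 n = f ((r : ℂ) • e1 n) :=
    eventually_nhdsWithin_of_forall fun r hr => (hf r hr).symm
  refine ⟨?_, hradius.congr' hfix⟩
  have hradius_ball : Tendsto (fun r : ℝ => (r : ℂ) • e1 n) (𝓝[Ioo 0 1] 1) (𝓝[ball 0 1] (e1 n)) :=
    tendsto_nhdsWithin_of_tendsto_nhds_of_eventually_within _ hradius <|
      eventually_nhdsWithin_of_forall fun r hr => by
        rw [mem_ball_zero_iff, norm_ofReal_smul_e1, abs_of_pos hr.1]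
        exact hr.2
  have : (𝓝[Ioo (0 : ℝ) 1] 1).NeBot := right_nhdsWithin_Ioo_neBot one_pos
  have hratio : ∃ᶠ z in 𝓝[ball 0 1] (e1 n), ENNReal.ofReal ((1 - ‖f z‖) / (1 - ‖z‖)) ≤ 1 := by
    refine hradius_ball.frequently (Eventually.frequently ?_)
    filter_upwards [self_mem_nhdsWithin] with r hr
    rw [hf r hr, norm_ofReal_smul_e1, abs_of_pos hr.1, div_self (sub_pos.2 hr.2).ne']
    simp
  exact (liminf_le_of_frequently_le' hratio).trans_lt ENNReal.one_lt_top

namespace UnivalentNoCone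

noncomputable def parabolaPoint (ε : ℝ) : EuclideanSpace ℂ (Fin 2) :=
  ((1 - ε : ℝ) : ℂ) • e1 1 + ((ε ^ 2 / 4 : ℝ) : ℂ) • EuclideanSpace.single 1 1

theorem norm_parabolaPoint_le {ε : ℝ} (hε1 : ε ≤ 1) :
    ‖parabolaPoint ε‖ ≤ 1 - ε + ε ^ 2 / 4 := by
  refine (norm_add_le _ _).trans_eq ?_
  rw [norm_smul, norm_smul, Complex.norm_real, Complex.norm_real,
    Real.norm_of_nonneg (by linarith), Real.norm_of_nonneg (by positivity)]
  simp [e1]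

theorem norm_e1_sub_parabolaPoint_le {ε : ℝ} (hε : 0 ≤ ε) :
    ‖e1 1 - parabolaPoint ε‖ ≤ ε + ε ^ 2 / 4 := by
  have h : e1 1 - parabolaPoint ε =
      (ε : ℂ) • e1 1 - ((ε ^ 2 / 4 : ℝ) : ℂ) • EuclideanSpace.single 1 1 := by
    rw [parabolaPoint]; push_cast; module
  refine h ▸ (norm_sub_le _ _).trans_eq ?_
  rw [norm_smul, norm_smul, Complex.norm_real, Complex.norm_real,
    Real.norm_of_nonneg hε, Real.norm_of_nonneg (by positivity)]
  simp [e1]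

theorem parabolaPoint_mem_coneB {M ε : ℝ} (hε : 0 < ε) (hε1 : ε ≤ 1)
    (hεM : ε * (M + 1) < 4 * (M - 1)) : parabolaPoint ε ∈ coneB 1 M := by
  have hnorm := norm_parabolaPoint_le hε1
  have hdist := norm_e1_sub_parabolaPoint_le hε.le
  have hM : 1 < M := by nlinarith
  refine ⟨by nlinarith, hdist.trans_lt ?_⟩
  calc ε + ε ^ 2 / 4 < M * (ε - ε ^ 2 / 4) := by nlinarith
    _ ≤ M * (1 - ‖parabolaPoint ε‖) := mul_le_mul_of_nonneg_left (by linarith) (by linarith)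

theorem eventually_parabolaPoint_mem_coneB {M : ℝ} (hM : 1 < M) :
    ∀ᶠ ε in 𝓝[>] 0, parabolaPoint ε ∈ coneB 1 M := by
  have hεM : ∀ᶠ ε : ℝ in 𝓝 0, ε * (M + 1) < 4 * (M - 1) :=
    ((continuous_id.mul continuous_const).tendsto' 0 0 (zero_mul _)).eventually_lt_const
      (by linarith)
  filter_upwards [self_mem_nhdsWithin, nhdsWithin_le_nhds (hεM.and (eventually_le_nhds one_pos))]
    with ε hε ⟨hεM, hε1⟩
  exact parabolaPoint_mem_coneB hε hε1 hεM

theorem tendsto_parabolaPoint : Tendsto parabolaPoint (𝓝 0) (𝓝 (e1 1)) := by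
  have : Continuous parabolaPoint := by unfold parabolaPoint; fun_prop
  simpa [parabolaPoint] using this.tendsto 0

variable {f : EuclideanSpace ℂ (Fin 2) → EuclideanSpace ℂ (Fin 2)}

theorem norm_map_le (hf0 : ∀ z : EuclideanSpace ℂ (Fin 2), f z 0 = z 0)
    (hf1 : ∀ z : EuclideanSpace ℂ (Fin 2), f z 1 = (1/4 : ℂ) * z 1 * (1 - z 0)^2)
    {z : EuclideanSpace ℂ (Fin 2)} (hz : ‖z‖ ≤ 1) : ‖f z‖ ≤ ‖z‖ := by
  have h_sub : ‖1 - z 0‖ ≤ 2 := calc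
    ‖1 - z 0‖ ≤ ‖(1 : ℂ)‖ + ‖z 0‖ := norm_sub_le _ _
    _ ≤ 1 + 1 := by rw [norm_one]; gcongr; exact (PiLp.norm_apply_le z 0).trans hz
    _ = 2 := by norm_num
  refine PiLp.norm_le_norm_of_forall_norm_apply_le (Fin.forall_fin_two.2 ⟨by rw [hf0], ?_⟩)
  calc ‖f z 1‖ = ‖z 1‖ * ‖1 - z 0‖ ^ 2 / 4 := by
        rw [hf1, norm_mul, norm_mul, norm_pow]; norm_num; ring
    _ ≤ ‖z 1‖ * 2 ^ 2 / 4 := by gcongr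
    _ = ‖z 1‖ := by ring

theorem mapsTo_ball (hf0 : ∀ z : EuclideanSpace ℂ (Fin 2), f z 0 = z 0)
    (hf1 : ∀ z : EuclideanSpace ℂ (Fin 2), f z 1 = (1/4 : ℂ) * z 1 * (1 - z 0)^2) :
    MapsTo f (ball 0 1) (ball 0 1) := fun z hz => by
  rw [mem_ball_zero_iff] at hz ⊢
  exact (norm_map_le hf0 hf1 hz.le).trans_lt hz

theorem injOn_ball (hf0 : ∀ z : EuclideanSpace ℂ (Fin 2), f z 0 = z 0)
    (hf1 : ∀ z : EuclideanSpace ℂ (Fin 2), f z 1 = (1/4 : ℂ) * z 1 * (1 - z 0)^2) :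
    InjOn f (ball 0 1) := by
  intro z hz w _ hzw
  have h0 : z 0 = w 0 := by rw [← hf0 z, ← hf0 w, hzw]
  have h_ne : (1 - z 0) ^ 2 ≠ 0 := by
    refine pow_ne_zero 2 (sub_ne_zero.2 fun h => ?_)
    have := (PiLp.norm_apply_le z 0).trans_lt (mem_ball_zero_iff.1 hz)
    rw [← h, norm_one] at this
    exact this.false
  have h_eq := hf1 w
  rw [← hzw, hf1 z, ← h0] at h_eq
  have h1 : z 1 = w 1 := mul_right_cancel₀ h_ne (by linear_combination 4 * h_eq)
  ext i
  fin_cases i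
  exacts [h0, h1]

theorem map_smul_e1 (hf0 : ∀ z : EuclideanSpace ℂ (Fin 2), f z 0 = z 0)
    (hf1 : ∀ z : EuclideanSpace ℂ (Fin 2), f z 1 = (1/4 : ℂ) * z 1 * (1 - z 0)^2) (c : ℂ) :
    f (c • e1 1) = c • e1 1 := by
  ext i
  fin_cases i
  · exact hf0 _
  · simp [hf1, e1]

theorem parabolaPoint_notMem_image (hf0 : ∀ z : EuclideanSpace ℂ (Fin 2), f z 0 = z 0)
    (hf1 : ∀ z : EuclideanSpace ℂ (Fin 2), f z 1 = (1/4 : ℂ) * z 1 * (1 - z 0)^2)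
    {ε : ℝ} (hε : ε ≠ 0) : parabolaPoint ε ∉ f '' ball 0 1 := by
  rintro ⟨z, hz, hfz⟩
  have h0 : z 0 = 1 - ε := by rw [← hf0, hfz]; simp [parabolaPoint, e1]
  have h1 : z 1 * (ε : ℂ) ^ 2 = 1 * (ε : ℂ) ^ 2 := by
    have := hf1 z
    rw [hfz, h0] at this
    simp [parabolaPoint, e1] at this
    linear_combination -4 * this
  have := (PiLp.norm_apply_le z 1).trans_lt (mem_ball_zero_iff.1 hz)
  rw [mul_right_cancel₀ (pow_ne_zero 2 (Complex.ofReal_ne_zero.2 hε)) h1, norm_one] at this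
  exact this.false

end UnivalentNoCone

open UnivalentNoCone

/-- **Example (a univalent map whose range contains no cone at `e₁`).**
The map `f(z₁,z₂) = (z₁, ¼·z₂·(1−z₁)²)` maps `B²` into `B²`, is injective on `B²`, has `e₁`
as a boundary regular fixed point, but its image does not eventually contain any cone with
vertex at `e₁`. -/
theorem univalent_example_range_contains_no_cone
    (f : EuclideanSpace ℂ (Fin 2) → EuclideanSpace ℂ (Fin 2))
    (hf0 : ∀ z : EuclideanSpace ℂ (Fin 2), f z 0 = z 0)
    (hf1 : ∀ z : EuclideanSpace ℂ (Fin 2), f z 1 = (1/4 : ℂ) * z 1 * (1 - z 0)^2) :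
    Set.MapsTo f (Metric.ball 0 1) (Metric.ball 0 1) ∧
    Set.InjOn f (Metric.ball 0 1) ∧
    IsBRFP f ∧
    ∀ M > 1, ∀ δ > 0,
      ¬ (coneB 1 M ∩ Metric.ball (e1 1) δ ⊆ f '' Metric.ball 0 1) := by
  refine ⟨mapsTo_ball hf0 hf1, injOn_ball hf0 hf1,
    isBRFP_of_eqOn_radius fun r _ => map_smul_e1 hf0 hf1 r, fun M hM δ hδ hsub => ?_⟩
  have hnear : ∀ᶠ ε in 𝓝[>] 0, parabolaPoint ε ∈ ball (e1 1) δ :=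
    (tendsto_parabolaPoint.mono_left nhdsWithin_le_nhds).eventually (ball_mem_nhds _ hδ)
  obtain ⟨ε, hcone, hball, hε⟩ :=
    ((eventually_parabolaPoint_mem_coneB hM).and (hnear.and self_mem_nhdsWithin)).exists
  exact parabolaPoint_notMem_image hf0 hf1 (ne_of_gt hε) (hsub ⟨hcone, hball⟩)
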